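/- arXiv:1907.07697 — 2 statements merged into one kernel-verified Lean document; each statement's English description precedes it below -/
import Mathlib

section
/- For M(p²) = M³/(p² + m²) + μ with M³, m², μ real and M³ + m²μ = 0 (and m² > 0), the mass function satisfies M(0) = 0, and the integral (4/π)∫₀^∞ p²[M(p²) − 2p² ∂_{p²}M(p²)]/(p² + M(p²)²)² dp equals 0, provided p² + M(p²)² > 0 for all p > 0. -/
open Real Filter Topology MeasureTheory Set

/-!
With `t(p) = M(p²)/p` one has `d/dp [arctan t + t/(1+t²)] = 2t'/(1+t²)²
= -2p²(M - 2p²M')/(p² + M²)²`, so the integrand is an exact derivative and the integral is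
half the jump of `arctan t + t/(1+t²)` between `p = 0` and `p = ∞`. At infinity `t → 0`
because `M` has a finite limit; at `p = 0`, `t → 0` precisely because `M(0) = 0` (otherwise
`arctan t → ±π/2` and the integral is a nonzero winding number).
-/

noncomputable def windingKernel (t : ℝ) : ℝ := arctan t + t / (1 + t ^ 2)

theorem hasDerivAt_windingKernel (t : ℝ) :
    HasDerivAt windingKernel (2 / (1 + t ^ 2) ^ 2) t := by
  have h1 : (1 : ℝ) + t ^ 2 ≠ 0 := by positivity
  have hden : HasDerivAt (fun x : ℝ => 1 + x ^ 2) (2 * t) t := by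
    simpa using (hasDerivAt_pow 2 t).const_add 1
  refine ((hasDerivAt_arctan t).add ((hasDerivAt_id' t).div hden h1)).congr_deriv ?_
  field_simp
  ring

theorem continuous_windingKernel : Continuous windingKernel :=
  continuous_iff_continuousAt.2 fun t => (hasDerivAt_windingKernel t).continuousAt

theorem windingKernel_zero : windingKernel 0 = 0 := by simp [windingKernel]

noncomputable def windingPotential (M : ℝ → ℝ) (p : ℝ) : ℝ :=
  -(1 / 2) * windingKernel (M (p ^ 2) / p)

noncomputable def windingIntegrand (M : ℝ → ℝ) (p : ℝ) : ℝ :=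
  p ^ 2 * (M (p ^ 2) - 2 * p ^ 2 * deriv M (p ^ 2)) / (p ^ 2 + M (p ^ 2) ^ 2) ^ 2

theorem hasDerivAt_windingPotential {M : ℝ → ℝ} {p : ℝ} (hp : p ≠ 0)
    (hM : DifferentiableAt ℝ M (p ^ 2)) :
    HasDerivAt (windingPotential M) (windingIntegrand M p) p := by
  have hMp : HasDerivAt (fun x => M (x ^ 2)) (deriv M (p ^ 2) * (2 * p)) p :=
    (hM.hasDerivAt.comp (h := fun x => x ^ 2) p (hasDerivAt_pow 2 p)).congr_deriv
      (by push_cast; ring)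
  have hratio := ((hasDerivAt_windingKernel _).comp p (hMp.div (hasDerivAt_id' p) hp)).const_mul
    (-(1 / 2) : ℝ)
  refine hratio.congr_deriv ?_
  have hsum : p ^ 2 + M (p ^ 2) ^ 2 ≠ 0 := by positivity
  simp only [windingIntegrand, Pi.div_apply]
  field_simp
  ring

theorem tendsto_windingPotential {M : ℝ → ℝ} {l : Filter ℝ}
    (h : Tendsto (fun p => M (p ^ 2) / p) l (𝓝 0)) :
    Tendsto (windingPotential M) l (𝓝 0) := by
  have := ((continuous_windingKernel.tendsto 0).comp h).const_mul (-(1 / 2) : ℝ)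
  rw [windingKernel_zero, mul_zero] at this
  exact this

theorem tendsto_comp_sq_div_nhdsNE_zero {M : ℝ → ℝ} (hM0 : M 0 = 0)
    (hM : DifferentiableAt ℝ M 0) :
    Tendsto (fun p => M (p ^ 2) / p) (𝓝[≠] 0) (𝓝 0) := by
  have hsq : Tendsto (fun p : ℝ => p ^ 2) (𝓝[≠] 0) (𝓝[≠] 0) := by
    refine tendsto_nhdsWithin_of_tendsto_nhds_of_eventually_within _ ?_ ?_
    · exact ((continuous_pow 2).tendsto' 0 0 (by simp)).mono_left nhdsWithin_le_nhds
    · filter_upwards [self_mem_nhdsWithin] with p hp using pow_ne_zero 2 hp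
  have hslope := (hM.hasDerivAt.tendsto_slope.comp hsq).mul
    (tendsto_id.mono_left (nhdsWithin_le_nhds (a := (0 : ℝ))))
  rw [mul_zero] at hslope
  refine hslope.congr' ?_
  filter_upwards [self_mem_nhdsWithin] with p hp
  simp only [Function.comp_apply, slope_def_field, hM0, sub_zero, id]
  field_simp

theorem tendsto_comp_sq_div_atTop {M : ℝ → ℝ} {c : ℝ} (hM : Tendsto M atTop (𝓝 c)) :
    Tendsto (fun p => M (p ^ 2) / p) atTop (𝓝 0) :=
  (hM.comp (tendsto_pow_atTop two_ne_zero)).div_atTop tendsto_id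

theorem integral_windingIntegrand_eq_zero {M : ℝ → ℝ} {c : ℝ} (hM0 : M 0 = 0)
    (hM : ∀ s, 0 ≤ s → DifferentiableAt ℝ M s) (hlim : Tendsto M atTop (𝓝 c))
    (hint : IntegrableOn (windingIntegrand M) (Ioi 0)) :
    ∫ p in Ioi (0 : ℝ), windingIntegrand M p = 0 := by
  have hzero : windingPotential M 0 = 0 := by simp [windingPotential, windingKernel_zero]
  have hcont : ContinuousWithinAt (windingPotential M) (Ici 0) 0 := by
    rw [← continuousWithinAt_Ioi_iff_Ici, ContinuousWithinAt, hzero]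
    exact tendsto_windingPotential
      ((tendsto_comp_sq_div_nhdsNE_zero hM0 (hM 0 le_rfl)).mono_left (nhdsGT_le_nhdsNE 0))
  rw [integral_Ioi_of_hasDerivAt_of_tendsto hcont
    (fun p hp => hasDerivAt_windingPotential hp.ne' (hM _ (sq_nonneg p))) hint
    (tendsto_windingPotential (tendsto_comp_sq_div_atTop hlim)), hzero, sub_zero]

theorem integrable_inv_sq_add {a : ℝ} (ha : 0 < a) :
    Integrable fun x : ℝ => (x ^ 2 + a)⁻¹ := by
  refine ((integrable_inv_one_add_sq.comp_div (sqrt_ne_zero'.2 ha)).const_mul a⁻¹).congr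
    (ae_of_all _ fun x => ?_)
  simp only [div_pow, sq_sqrt ha.le]
  field_simp
  ring

noncomputable def massFunction (M3 msq μ s : ℝ) : ℝ := M3 / (s + msq) + μ

section massFunction

variable {M3 msq μ : ℝ}

theorem massFunction_zero (hm : 0 < msq) (hrel : M3 + msq * μ = 0) :
    massFunction M3 msq μ 0 = 0 := by
  rw [massFunction, zero_add, div_add' _ _ _ hm.ne', mul_comm μ, hrel, zero_div]

theorem hasDerivAt_massFunction {s : ℝ} (hs : s + msq ≠ 0) :
    HasDerivAt (massFunction M3 msq μ) (-M3 / (s + msq) ^ 2) s := by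
  refine (((hasDerivAt_const s M3).div ((hasDerivAt_id' s).add_const msq) hs).add_const μ
    ).congr_deriv ?_
  ring

theorem tendsto_massFunction_atTop : Tendsto (massFunction M3 msq μ) atTop (𝓝 μ) := by
  have h := ((tendsto_const_nhds (x := M3)).div_atTop
    (tendsto_atTop_add_const_right _ msq tendsto_id)).add_const μ
  rwa [zero_add] at h

theorem windingIntegrand_massFunction (hm : 0 < msq) (hrel : M3 + msq * μ = 0) {p : ℝ}
    (hp : p ≠ 0) :
    windingIntegrand (massFunction M3 msq μ) p =
      μ * (p ^ 2 - msq) * (p ^ 2 + msq) ^ 2 / ((p ^ 2 + msq) ^ 2 + μ ^ 2 * p ^ 2) ^ 2 := by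
  have hq : p ^ 2 + msq ≠ 0 := by positivity
  have hD : (p ^ 2 + msq) ^ 2 + μ ^ 2 * p ^ 2 ≠ 0 := by positivity
  rw [windingIntegrand, (hasDerivAt_massFunction hq).deriv, massFunction,
    eq_neg_of_add_eq_zero_left hrel]
  field_simp
  ring

theorem abs_windingIntegrand_massFunction_le (hm : 0 < msq) (hrel : M3 + msq * μ = 0) {p : ℝ}
    (hp : p ≠ 0) :
    |windingIntegrand (massFunction M3 msq μ) p| ≤ |μ| * (p ^ 2 + msq)⁻¹ := by
  have hq : 0 < p ^ 2 + msq := by positivity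
  have hnum : |p ^ 2 - msq| ≤ p ^ 2 + msq := abs_le.2 ⟨by nlinarith, by linarith⟩
  have hden : (p ^ 2 + msq) ^ 2 ≤ (p ^ 2 + msq) ^ 2 + μ ^ 2 * p ^ 2 := by
    nlinarith [sq_nonneg (μ * p)]
  rw [windingIntegrand_massFunction hm hrel hp, abs_div, abs_mul, abs_mul,
    abs_of_pos (by positivity : 0 < (p ^ 2 + msq) ^ 2),
    abs_of_pos (by positivity : 0 < ((p ^ 2 + msq) ^ 2 + μ ^ 2 * p ^ 2) ^ 2),
    div_le_iff₀ (by positivity)]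
  calc |μ| * |p ^ 2 - msq| * (p ^ 2 + msq) ^ 2
      ≤ |μ| * (p ^ 2 + msq) * (p ^ 2 + msq) ^ 2 := by gcongr
    _ = |μ| * (p ^ 2 + msq)⁻¹ * ((p ^ 2 + msq) ^ 2) ^ 2 := by field_simp
    _ ≤ |μ| * (p ^ 2 + msq)⁻¹ * ((p ^ 2 + msq) ^ 2 + μ ^ 2 * p ^ 2) ^ 2 := by gcongr

theorem integrableOn_windingIntegrand_massFunction (hm : 0 < msq) (hrel : M3 + msq * μ = 0) :
    IntegrableOn (windingIntegrand (massFunction M3 msq μ)) (Ioi 0) := by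
  have hcont : ContinuousOn (windingIntegrand (massFunction M3 msq μ)) (Ioi 0) :=
    ContinuousOn.congr (f := fun p : ℝ =>
        μ * (p ^ 2 - msq) * (p ^ 2 + msq) ^ 2 / ((p ^ 2 + msq) ^ 2 + μ ^ 2 * p ^ 2) ^ 2)
      (by fun_prop (disch := intro p _; positivity))
      fun p hp => windingIntegrand_massFunction hm hrel (ne_of_gt hp)
  refine ((integrable_inv_sq_add hm).const_mul |μ|).integrableOn.mono'
    (hcont.aestronglyMeasurable measurableSet_Ioi) ?_
  filter_upwards [ae_restrict_mem measurableSet_Ioi] with p hp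
  exact (norm_eq_abs _).trans_le (abs_windingIntegrand_massFunction_le hm hrel (ne_of_gt hp))

end massFunction

theorem N3_eq_zero_on_phase_boundary_general (M3 msq μ : ℝ) (hm : 0 < msq)
    (hrel : M3 + msq * μ = 0) (M : ℝ → ℝ) (hMdef : ∀ s : ℝ, M s = M3 / (s + msq) + μ) :
    M 0 = 0 ∧
    (4 / π) * ∫ p in Set.Ioi (0 : ℝ),
      p ^ 2 * (M (p ^ 2) - 2 * p ^ 2 * deriv M (p ^ 2))
        / (p ^ 2 + (M (p ^ 2)) ^ 2) ^ 2 = 0 := by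
  obtain rfl : M = massFunction M3 msq μ := funext hMdef
  have hM0 := massFunction_zero hm hrel
  refine ⟨hM0, ?_⟩
  have hdiff : ∀ s, 0 ≤ s → DifferentiableAt ℝ (massFunction M3 msq μ) s :=
    fun s hs => (hasDerivAt_massFunction (by positivity)).differentiableAt
  change 4 / π * ∫ p in Ioi (0 : ℝ), windingIntegrand (massFunction M3 msq μ) p = 0
  rw [integral_windingIntegrand_eq_zero hM0 hdiff tendsto_massFunction_atTop
    (integrableOn_windingIntegrand_massFunction hm hrel), mul_zero]

/-- For `M(s) = M³/(s + m²) + μ` with `M³ + m²μ = 0` and `m² > 0`, one has `M 0 = 0`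
and the winding-number integral `(4/π)∫₀^∞ p²[M(p²) − 2p² M'(p²)]/(p² + M(p²)²)² dp`
equals `0`, provided `p² + M(p²)² > 0` for all `p > 0`.  Here `M3` denotes the single
real parameter `M³` and `msq` denotes `m²`. -/
theorem N3_eq_zero_on_phase_boundary (M3 msq μ : ℝ) (hm : 0 < msq)
    (hrel : M3 + msq * μ = 0) (M : ℝ → ℝ) (hMdef : ∀ s : ℝ, M s = M3 / (s + msq) + μ)
    (hpos : ∀ p : ℝ, 0 < p → 0 < p ^ 2 + (M (p ^ 2)) ^ 2) :
    M 0 = 0 ∧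
    (4 / π) * ∫ p in Set.Ioi (0 : ℝ),
      p ^ 2 * (M (p ^ 2) - 2 * p ^ 2 * deriv M (p ^ 2))
        / (p ^ 2 + (M (p ^ 2)) ^ 2) ^ 2 = 0 :=
  N3_eq_zero_on_phase_boundary_general M3 msq μ hm hrel M hMdef
end

section
/- For the mass function M(s) = M³/(s + m²) + μ with M³ = −1, m² = 1, μ = 1 (in arbitrary units), the winding-number integral (4/π)∫₀^∞ p²[M(p²) − 2p² M'(p²)]/(p² + M(p²)²)² dp equals 0. -/
/-!
Since `M(s) = s/(s+1)` and `M'(s) = 1/(s+1)²`, the integrand simplifies to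
`w(p) = (p² - 1)(p² + 1)² / (p⁴ + 3p² + 1)²`, which satisfies `w(1/p) / p² = -w(p)`.
The substitution `p ↦ 1/p` therefore maps `∫₀^∞ w` to its own negative.
-/

open Real MeasureTheory Set

theorem integral_Ioi_eq_zero_of_inv_antisymm {E : Type*} [NormedAddCommGroup E]
    [NormedSpace ℝ E] {f : ℝ → E} (hf : ∀ x > 0, (x ^ 2)⁻¹ • f x⁻¹ = -f x) :
    ∫ x in Ioi (0 : ℝ), f x = 0 := by
  have hneg : ∫ x in Ioi (0 : ℝ), f x = -∫ x in Ioi (0 : ℝ), f x := by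
    calc ∫ x in Ioi (0 : ℝ), f x
        = ∫ x in Ioi (0 : ℝ), (|(-1 : ℝ)| * x ^ ((-1 : ℝ) - 1)) • f (x ^ (-1 : ℝ)) :=
          (integral_comp_rpow_Ioi f (by norm_num)).symm
      _ = ∫ x in Ioi (0 : ℝ), -f x := by
          refine setIntegral_congr_fun measurableSet_Ioi fun x (hx : 0 < x) => ?_
          have hpow : x ^ ((-1 : ℝ) - 1) = (x ^ 2)⁻¹ := by
            rw [show (-1 : ℝ) - 1 = -(2 : ℕ) by norm_num, rpow_neg hx.le, rpow_natCast]
          simp only [abs_neg, abs_one, one_mul, hpow, rpow_neg_one, hf x hx]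
      _ = -∫ x in Ioi (0 : ℝ), f x := integral_neg f
  rw [eq_neg_iff_add_eq_zero, ← two_smul ℝ, smul_eq_zero] at hneg
  exact hneg.resolve_left two_ne_zero

noncomputable def windingDensity (p : ℝ) : ℝ :=
  (p ^ 2 - 1) * (p ^ 2 + 1) ^ 2 / (p ^ 4 + 3 * p ^ 2 + 1) ^ 2

theorem windingDensity_inv {p : ℝ} (hp : p ≠ 0) :
    (p ^ 2)⁻¹ * windingDensity p⁻¹ = -windingDensity p := by
  have hq : p ^ 4 + 3 * p ^ 2 + 1 ≠ 0 := by positivity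
  unfold windingDensity
  field_simp
  ring

theorem deriv_mass {s : ℝ} (hs : s + 1 ≠ 0) :
    deriv (fun s : ℝ => -1 / (s + 1) + 1) s = 1 / (s + 1) ^ 2 := by
  have h : HasDerivAt (fun s : ℝ => -1 / (s + 1) + 1) ((0 * (s + 1) - -1 * 1) / (s + 1) ^ 2) s :=
    ((hasDerivAt_const s (-1 : ℝ)).div ((hasDerivAt_id' s).add_const 1) hs).add_const 1
  rw [h.deriv]
  ring

theorem windingIntegrand_eq {p : ℝ} (hp : p ≠ 0) :
    p ^ 2 * ((fun s : ℝ => -1 / (s + 1) + 1) (p ^ 2)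
        - 2 * p ^ 2 * deriv (fun s : ℝ => -1 / (s + 1) + 1) (p ^ 2))
      / (p ^ 2 + ((fun s : ℝ => -1 / (s + 1) + 1) (p ^ 2)) ^ 2) ^ 2 = windingDensity p := by
  have hs : p ^ 2 + 1 ≠ 0 := by positivity
  have hq : p ^ 4 + 3 * p ^ 2 + 1 ≠ 0 := by positivity
  rw [deriv_mass hs, windingDensity]
  field_simp
  ring

/-- For `M(s) = −1/(s+1) + 1` (that is, `M³ = −1`, `m² = 1`, `μ = 1`), the
winding-number integral `(4/π)∫₀^∞ p²[M(p²) − 2p² M'(p²)]/(p² + M(p²)²)² dp = 0`. -/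
theorem N3_eq_zero_example :
    (4 / π) * ∫ p in Set.Ioi (0 : ℝ),
      p ^ 2 * ((fun s : ℝ => -1 / (s + 1) + 1) (p ^ 2)
          - 2 * p ^ 2 * deriv (fun s : ℝ => -1 / (s + 1) + 1) (p ^ 2))
        / (p ^ 2 + ((fun s : ℝ => -1 / (s + 1) + 1) (p ^ 2)) ^ 2) ^ 2 = 0 := by
  rw [setIntegral_congr_fun measurableSet_Ioi fun p (hp : 0 < p) => windingIntegrand_eq hp.ne',
    integral_Ioi_eq_zero_of_inv_antisymm fun p hp => windingDensity_inv hp.ne', mul_zero]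
end
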